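/- For any κ in the nonempty region ℓ/((σ_θ+2h)(σ_θ+2h+ℓ)) < κ < min{h/((σ_θ+h)(σ_θ+2h)), ℓ/((σ_θ+ℓ)(σ_θ+2ℓ))} with h > ℓ > 0 and σ_θ > 0, a high-precision agent strictly prefers the pair {h,h} (payoff −1/(σ_θ+2h) − κ) to being a singleton (payoff −1/(σ_θ+h)) and to the triple {h,h,ℓ} (payoff −1/(σ_θ+2h+ℓ) − 2κ). -/

import Mathlib

/-! With value `-1/(σθ + S)` of total precision `S`, adding precision `d` to a clique of base
precision `a` is worth `d / (a * (a + d))`. The upper bound on `κ` says that the second `h`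
is worth more than one link, and the lower bound that `ℓ` joining `{h, h}` is worth less. -/

theorem neg_one_div_add_sub_neg_one_div {a d : ℝ} (ha : a ≠ 0) (had : a + d ≠ 0) :
    -1 / (a + d) - -1 / a = d / (a * (a + d)) := by
  field_simp
  ring

theorem stmt15_general (σθ h ℓ κ : ℝ) (hσ : 0 < σθ) (hℓ : 0 < ℓ) (hhl : ℓ < h)
    (hlow : ℓ / ((σθ + 2 * h) * (σθ + 2 * h + ℓ)) < κ)
    (hhigh : κ < min (h / ((σθ + h) * (σθ + 2 * h)))
                     (ℓ / ((σθ + ℓ) * (σθ + 2 * ℓ)))) :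
    -1 / (σθ + h) < -1 / (σθ + 2 * h) - κ ∧
    -1 / (σθ + 2 * h + ℓ) - 2 * κ < -1 / (σθ + 2 * h) - κ := by
  have hh : 0 < h := hℓ.trans hhl
  have gain_h : -1 / (σθ + 2 * h) - -1 / (σθ + h) = h / ((σθ + h) * (σθ + 2 * h)) := by
    have := neg_one_div_add_sub_neg_one_div (a := σθ + h) (d := h) (by positivity) (by positivity)
    rwa [show σθ + h + h = σθ + 2 * h by ring] at this
  have gain_ℓ : -1 / (σθ + 2 * h + ℓ) - -1 / (σθ + 2 * h) =
      ℓ / ((σθ + 2 * h) * (σθ + 2 * h + ℓ)) :=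
    neg_one_div_add_sub_neg_one_div (by positivity) (by positivity)
  have hκh := hhigh.trans_le (min_le_left _ _)
  constructor <;> linarith

/-- For any `κ` in the region, a high-precision agent strictly prefers the pair
`{h,h}` (payoff `−1/(σθ+2h) − κ`) to being a singleton (payoff `−1/(σθ+h)`)
and to the triple `{h,h,ℓ}` (payoff `−1/(σθ+2h+ℓ) − 2κ`). -/
theorem stmt15 (σθ h ℓ κ : ℝ) (hσ : 0 < σθ) (hℓ : 0 < ℓ) (hhl : ℓ < h)
    (hκ : 0 < κ)
    (hlow : ℓ / ((σθ + 2 * h) * (σθ + 2 * h + ℓ)) < κ)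
    (hhigh : κ < min (h / ((σθ + h) * (σθ + 2 * h)))
                     (ℓ / ((σθ + ℓ) * (σθ + 2 * ℓ)))) :
    -1 / (σθ + h) < -1 / (σθ + 2 * h) - κ ∧
    -1 / (σθ + 2 * h + ℓ) - 2 * κ < -1 / (σθ + 2 * h) - κ :=
  stmt15_general σθ h ℓ κ hσ hℓ hhl hlow hhigh
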